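/- arXiv:1804.08767 — 3 statements merged into one kernel-verified Lean document; each statement's English description precedes it below -/
import Mathlib

section
/- Let Σ be a connected graph whose path metric d_Σ is δ-hyperbolic in the sense of the Gromov 4-point condition, and let C be a positive integer. Let Ξ be the C-expansion of Σ, i.e., the graph obtained from Σ by adding an edge between every pair of vertices at distance at most C in Σ. Then the path metric of Ξ is (δ/C + 6)-hyperbolic in the sense of the Gromov 4-point condition. -/
/-! Distances in the `C`-expansion `Ξ` of a connected graph `Σ` are, up to an additive error of
one, the distances of `Σ` divided by `C`: an edge of `Ξ` spans at most `C` in `Σ`, and a geodesic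
of `Σ` can be cut into pieces of length `C`. The four-point condition survives such a
`(1/C, 1)`-quasi-isometry with constant `δ/C + 2`. -/

/-- The `C`-expansion of a graph: add an edge between every pair of distinct
vertices at graph distance at most `C`. -/
def expansionGraph {V : Type*} (G : SimpleGraph V) (C : ℕ) : SimpleGraph V where
  Adj u v := u ≠ v ∧ G.dist u v ≤ C
  symm := ⟨fun u v h => ⟨h.1.symm, by rw [SimpleGraph.dist_comm]; exact h.2⟩⟩
  loopless := ⟨fun u h => h.1 rfl⟩

def IsFourPointHyperbolic {V : Type*} (d : V → V → ℝ) (δ : ℝ) : Prop :=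
  ∀ x y z w : V, d x z + d y w ≤ max (d x y + d z w) (d x w + d z y) + δ

namespace IsFourPointHyperbolic

variable {V : Type*} {d d' : V → V → ℝ} {δ : ℝ}

theorem mono (h : IsFourPointHyperbolic d δ) {δ' : ℝ} (hδ : δ ≤ δ') :
    IsFourPointHyperbolic d δ' :=
  fun x y z w => (h x y z w).trans (by linarith)

theorem of_div_le_of_le_div_add {c ε : ℝ} (h : IsFourPointHyperbolic d δ) (hc : 0 ≤ c)
    (hlow : ∀ a b, d a b / c ≤ d' a b) (hup : ∀ a b, d' a b ≤ d a b / c + ε) :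
    IsFourPointHyperbolic d' (δ / c + 2 * ε) := by
  intro x y z w
  calc d' x z + d' y w ≤ (d x z + d y w) / c + 2 * ε := by
        linarith [hup x z, hup y w, add_div (d x z) (d y w) c]
    _ ≤ (max (d x y + d z w) (d x w + d z y) + δ) / c + 2 * ε := by
        gcongr ?_ / _ + _; exact h x y z w
    _ = max (d x y / c + d z w / c) (d x w / c + d z y / c) + (δ / c + 2 * ε) := by
        rw [add_div, ← max_div_div_right hc, add_div, add_div, add_assoc]
    _ ≤ max (d' x y + d' z w) (d' x w + d' z y) + (δ / c + 2 * ε) := by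
        gcongr <;> apply hlow

end IsFourPointHyperbolic

namespace SimpleGraph

variable {V : Type*} {G : SimpleGraph V} {C : ℕ} {u v : V}

theorem Reachable.exists_dist_le_and_dist_le_sub (h : G.Reachable u v) (k : ℕ) :
    ∃ m, G.dist u m ≤ k ∧ G.dist m v ≤ G.dist u v - k := by
  obtain ⟨p, hp⟩ := h.exists_walk_length_eq_dist
  refine ⟨p.getVert k, ?_, ?_⟩
  · exact (dist_le (p.take k)).trans (by simp)
  · exact (dist_le (p.drop k)).trans (by simp [hp])

theorem le_expansionGraph (hC : 0 < C) : G ≤ expansionGraph G C :=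
  fun _ _ h => ⟨h.ne, by rw [dist_eq_one_iff_adj.mpr h]; exact hC⟩

theorem Connected.expansionGraph (hconn : G.Connected) (hC : 0 < C) :
    (expansionGraph G C).Connected :=
  hconn.mono (le_expansionGraph hC)

theorem dist_expansionGraph_le_one (h : G.dist u v ≤ C) :
    (expansionGraph G C).dist u v ≤ 1 := by
  by_cases huv : u = v
  · simp [huv]
  · exact (dist_eq_one_iff_adj.mpr (show (expansionGraph G C).Adj u v from ⟨huv, h⟩)).le

theorem Walk.dist_le_mul_length (hconn : G.Connected) (p : (expansionGraph G C).Walk u v) :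
    G.dist u v ≤ C * p.length := by
  induction p with
  | nil => simp
  | @cons a b _ hab _ ih =>
    calc G.dist a _ ≤ G.dist a b + G.dist b _ := hconn.dist_triangle
      _ ≤ C + C * _ := add_le_add hab.2 ih
      _ = C * (Walk.cons hab _).length := by rw [Walk.length_cons]; ring

theorem dist_le_mul_dist_expansionGraph (hconn : G.Connected) (hC : 0 < C) (u v : V) :
    G.dist u v ≤ C * (expansionGraph G C).dist u v := by
  obtain ⟨p, hp⟩ := (hconn.expansionGraph hC u v).exists_walk_length_eq_dist
  exact hp ▸ Walk.dist_le_mul_length hconn p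

theorem dist_expansionGraph_le_of_dist_le_mul (hconn : G.Connected) (hC : 0 < C) (k : ℕ) :
    ∀ u v, G.dist u v ≤ C * k → (expansionGraph G C).dist u v ≤ k := by
  induction k with
  | zero =>
    intro u v h
    simp [(hconn.dist_eq_zero_iff).mp (Nat.le_zero.mp (by simpa using h))]
  | succ k ih =>
    intro u v h
    obtain ⟨m, hum, hmv⟩ := (hconn u v).exists_dist_le_and_dist_le_sub C
    calc (expansionGraph G C).dist u v
        ≤ (expansionGraph G C).dist u m + (expansionGraph G C).dist m v :=
          (hconn.expansionGraph hC).dist_triangle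
      _ ≤ 1 + k :=
          add_le_add (dist_expansionGraph_le_one hum) (ih m v (by rw [mul_add] at h; omega))
      _ = k + 1 := add_comm 1 k

theorem dist_div_le_dist_expansionGraph (hconn : G.Connected) (hC : 0 < C) (u v : V) :
    (G.dist u v : ℝ) / C ≤ (expansionGraph G C).dist u v := by
  rw [div_le_iff₀ (by exact_mod_cast hC), mul_comm]
  exact_mod_cast dist_le_mul_dist_expansionGraph hconn hC u v

theorem dist_expansionGraph_le_dist_div_add_one (hconn : G.Connected) (hC : 0 < C) (u v : V) :
    ((expansionGraph G C).dist u v : ℝ) ≤ (G.dist u v : ℝ) / C + 1 := by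
  have h := dist_expansionGraph_le_of_dist_le_mul hconn hC (G.dist u v / C + 1) u v
    (Nat.lt_mul_div_succ _ hC).le
  calc ((expansionGraph G C).dist u v : ℝ) ≤ ((G.dist u v / C : ℕ) : ℝ) + 1 := by
        exact_mod_cast h
    _ ≤ (G.dist u v : ℝ) / C + 1 := by gcongr; exact Nat.cast_div_le

end SimpleGraph

theorem expansion_hyperbolic_general {V : Type*} (Sg : SimpleGraph V) (hconn : Sg.Connected)
    (δ : ℝ) (C : ℕ) (hC : 0 < C)
    (hδ : ∀ x y z w : V, (Sg.dist x z : ℝ) + (Sg.dist y w : ℝ) ≤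
      max ((Sg.dist x y : ℝ) + (Sg.dist z w : ℝ)) ((Sg.dist x w : ℝ) + (Sg.dist z y : ℝ)) + δ) :
    ∀ x y z w : V,
      ((expansionGraph Sg C).dist x z : ℝ) + ((expansionGraph Sg C).dist y w : ℝ) ≤
      max (((expansionGraph Sg C).dist x y : ℝ) + ((expansionGraph Sg C).dist z w : ℝ))
          (((expansionGraph Sg C).dist x w : ℝ) + ((expansionGraph Sg C).dist z y : ℝ))
        + (δ / C + 6) := by
  have hΞ : IsFourPointHyperbolic (fun a b => ((expansionGraph Sg C).dist a b : ℝ))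
      (δ / C + 2 * 1) :=
    IsFourPointHyperbolic.of_div_le_of_le_div_add (d := fun a b => (Sg.dist a b : ℝ)) hδ
      (Nat.cast_nonneg C) (SimpleGraph.dist_div_le_dist_expansionGraph hconn hC)
      (SimpleGraph.dist_expansionGraph_le_dist_div_add_one hconn hC)
  exact hΞ.mono (by norm_num)

/-- If a connected graph is `δ`-hyperbolic (Gromov four-point condition for its
path metric), then its `C`-expansion is `(δ/C + 6)`-hyperbolic. -/
theorem expansion_hyperbolic {V : Type*} (Sg : SimpleGraph V) (hconn : Sg.Connected)
    (δ : ℝ) (hδ0 : 0 ≤ δ) (C : ℕ) (hC : 0 < C)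
    (hδ : ∀ x y z w : V, (Sg.dist x z : ℝ) + (Sg.dist y w : ℝ) ≤
      max ((Sg.dist x y : ℝ) + (Sg.dist z w : ℝ)) ((Sg.dist x w : ℝ) + (Sg.dist z y : ℝ)) + δ) :
    ∀ x y z w : V,
      ((expansionGraph Sg C).dist x z : ℝ) + ((expansionGraph Sg C).dist y w : ℝ) ≤
      max (((expansionGraph Sg C).dist x y : ℝ) + ((expansionGraph Sg C).dist z w : ℝ))
          (((expansionGraph Sg C).dist x w : ℝ) + ((expansionGraph Sg C).dist z y : ℝ))
        + (δ / C + 6) :=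
  expansion_hyperbolic_general Sg hconn δ C hC hδ
end

section
/- Let (S,d) be a metric space such that every point of S is within distance 1/2 of a point of a subset V ⊆ S, and suppose the restriction of d to V satisfies the Gromov 4-point condition with constant δ'. Then (S,d) satisfies the Gromov 4-point condition with constant δ' + 6. -/
/-- If every point of a metric space `S` is within `1/2` of a subset `V`, and the
restriction of the metric to `V` satisfies the Gromov four-point condition with
constant `δ'`, then `S` satisfies it with constant `δ' + 6`. -/
theorem fourpoint_of_dense_subset {S : Type*} [MetricSpace S] (V : Set S) (δ' : ℝ)
    (hV : ∀ s : S, ∃ v ∈ V, dist s v ≤ 1 / 2)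
    (h4 : ∀ x ∈ V, ∀ y ∈ V, ∀ z ∈ V, ∀ w ∈ V, dist x z + dist y w ≤
      max (dist x y + dist z w) (dist x w + dist z y) + δ') :
    ∀ x y z w : S, dist x z + dist y w ≤
      max (dist x y + dist z w) (dist x w + dist z y) + (δ' + 6) := by
  intro x y z w
  obtain ⟨x', hx'V, hx'⟩ := hV x
  obtain ⟨y', hy'V, hy'⟩ := hV y
  obtain ⟨z', hz'V, hz'⟩ := hV z
  obtain ⟨w', hw'V, hw'⟩ := hV w
  have key := h4 x' hx'V y' hy'V z' hz'V w' hw'V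
  have h1 : dist x z ≤ dist x x' + dist x' z' + dist z' z := dist_triangle4 x x' z' z
  have h2 : dist y w ≤ dist y y' + dist y' w' + dist w' w := dist_triangle4 y y' w' w
  have h3 : dist x' y' ≤ dist x' x + dist x y + dist y y' := dist_triangle4 x' x y y'
  have h5 : dist z' w' ≤ dist z' z + dist z w + dist w w' := dist_triangle4 z' z w w'
  have h6 : dist x' w' ≤ dist x' x + dist x w + dist w w' := dist_triangle4 x' x w w'
  have h7 : dist z' y' ≤ dist z' z + dist z y + dist y y' := dist_triangle4 z' z y y'
  have e1 : dist z' z = dist z z' := dist_comm _ _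
  have e2 : dist w' w = dist w w' := dist_comm _ _
  have e3 : dist x' x = dist x x' := dist_comm _ _
  have e4 : dist y y' = dist y' y := dist_comm _ _
  rcases max_cases (dist x' y' + dist z' w') (dist x' w' + dist z' y') with ⟨hm, _⟩ | ⟨hm, _⟩ <;>
    rw [hm] at key
  · have := le_max_left (dist x y + dist z w) (dist x w + dist z y)
    linarith
  · have := le_max_right (dist x y + dist z w) (dist x w + dist z y)
    linarith
end

section
/- Let G and H be groups with finite symmetric generating sets X and Y respectively, and let φ : G → H be a surjective homomorphism with φ(X) = Y. Then the Følner constant satisfies Føl(H,Y) ≤ Føl(G,X), where Føl(G,X) = inf over finite nonempty subsets A ⊆ G of |∂_X A|/|A| and ∂_X A = {a ∈ A : ax ∉ A for some x ∈ X ∪ X⁻¹}. -/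
open scoped Classical

/-- The boundary `∂_X A` of a finite set `A` with respect to a finite generating
set `X`: elements `a ∈ A` with `a x ∉ A` for some `x ∈ X^{±1}`. -/
noncomputable def folBoundary {G : Type*} [Group G] (X : Finset G) (A : Finset G) : Finset G :=
  A.filter (fun a => ∃ x ∈ X ∪ X.image (·⁻¹), a * x ∉ A)

/-- The Følner constant of `G` with respect to a finite generating set `X`. -/
noncomputable def folConst {G : Type*} [Group G] (X : Finset G) : ℝ :=
  ⨅ A : {A : Finset G // A.Nonempty}, ((folBoundary X A.1).card : ℝ) / (A.1.card : ℝ)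

/-!
A coarea argument. For `A ⊆ G` let `f h = |A ∩ φ⁻¹(h)|` and let `Bₙ = {h | n ≤ f h}` be its
superlevel sets, so that `∑ₙ |Bₙ| = |A|`. A point `h` lies in `∂Bₙ` exactly for
`min_x f (h φ(x)) < n ≤ f h`, and `f h - f (h φ(x))` is at most the number of points of
`∂A` over `h`, since right multiplication by `x` injects the rest of the fibre over `h`
into the fibre over `h φ(x)`. Hence `∑ₙ |∂Bₙ| ≤ |∂A|`, and some `Bₙ` has
`|∂Bₙ| / |Bₙ| ≤ |∂A| / |A|`.
-/

open Finset

section FolnerConstant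

variable {G H : Type*} [Group G] [Group H]

lemma mem_folBoundary {X A : Finset G} {a : G} :
    a ∈ folBoundary X A ↔ a ∈ A ∧ ∃ x ∈ X ∪ X.image (·⁻¹), a * x ∉ A :=
  mem_filter

lemma folBoundary_subset (X A : Finset G) : folBoundary X A ⊆ A :=
  filter_subset _ _

lemma folConst_le_div {X B : Finset G} (hB : B.Nonempty) :
    folConst X ≤ #(folBoundary X B) / #B := by
  refine ciInf_le ⟨0, ?_⟩ (⟨B, hB⟩ : {A : Finset G // A.Nonempty})
  rintro _ ⟨A, rfl⟩
  positivity

lemma le_folConst {X : Finset G} {c : ℝ}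
    (h : ∀ A : Finset G, A.Nonempty → c ≤ #(folBoundary X A) / #A) : c ≤ folConst X :=
  have : Nonempty {A : Finset G // A.Nonempty} := ⟨⟨{1}, singleton_nonempty 1⟩⟩
  le_ciInf fun A => h A.1 A.2

lemma image_union_image_inv (φ : G →* H) (X : Finset G) :
    X.image φ ∪ (X.image φ).image (·⁻¹) = (X ∪ X.image (·⁻¹)).image φ := by
  simp only [image_inv_eq_inv, image_union, image_inv]

end FolnerConstant

lemma sum_card_filter_le_eq_sum {ι : Type*} (S : Finset ι) (f : ι → ℕ) {N : ℕ}
    (hN : ∀ i ∈ S, f i ≤ N) :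
    ∑ n ∈ Icc 1 N, #{i ∈ S | n ≤ f i} = ∑ i ∈ S, f i := by
  simp only [card_filter]
  rw [sum_comm]
  refine sum_congr rfl fun i hi => ?_
  have : {n ∈ Icc 1 N | n ≤ f i} = Icc 1 (f i) := by
    ext n
    simp only [mem_filter, mem_Icc]
    have := hN i hi
    omega
  rw [← card_filter, this, Nat.card_Icc, Nat.add_sub_cancel]

section Fibres

variable {α β : Type*} (f : α → β) (A : Finset α)

noncomputable def fiberCard (b : β) : ℕ := #{a ∈ A | f a = b}

lemma sum_fiberCard_image : ∑ b ∈ A.image f, fiberCard f A b = #A :=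
  (card_eq_sum_card_image f A).symm

lemma fiberCard_pos {b : β} : 0 < fiberCard f A b ↔ b ∈ A.image f := by
  simp only [fiberCard, card_pos, filter_nonempty_iff, mem_image]

noncomputable def superlevelSet (n : ℕ) : Finset β := {b ∈ A.image f | n ≤ fiberCard f A b}

lemma mem_superlevelSet {n : ℕ} (hn : 1 ≤ n) {b : β} :
    b ∈ superlevelSet f A n ↔ n ≤ fiberCard f A b := by
  rw [superlevelSet, mem_filter]
  exact ⟨And.right, fun h => ⟨(fiberCard_pos f A).1 (by omega), h⟩⟩

lemma sum_card_superlevelSet {N : ℕ} (hN : ∀ b ∈ A.image f, fiberCard f A b ≤ N) :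
    ∑ n ∈ Icc 1 N, #(superlevelSet f A n) = #A := by
  rw [← sum_fiberCard_image]
  exact sum_card_filter_le_eq_sum _ _ hN

end Fibres

section Boundary

variable {G H : Type*} [Group G] [Group H] (φ : G →* H) (X : Finset G) {A : Finset G}

lemma mem_folBoundary_superlevelSet {n : ℕ} (hn : 1 ≤ n) {h : H} :
    h ∈ folBoundary (X.image φ) (superlevelSet φ A n) ↔
      n ≤ fiberCard φ A h ∧ ∃ x ∈ X ∪ X.image (·⁻¹), fiberCard φ A (h * φ x) < n := by
  simp only [mem_folBoundary, mem_superlevelSet φ A hn, image_union_image_inv, mem_image,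
    exists_exists_and_eq_and, not_le]

lemma fiberCard_sub_fiberCard_mul_le {x : G} (hx : x ∈ X ∪ X.image (·⁻¹)) (h : H) :
    fiberCard φ A h - fiberCard φ A (h * φ x) ≤ fiberCard φ (folBoundary X A) h := by
  have hsplit := card_filter_add_card_filter_not (s := {a ∈ A | φ a = h})
    (fun a => a * x ∈ A)
  have hstay : #{a ∈ {a ∈ A | φ a = h} | a * x ∈ A} ≤ fiberCard φ A (h * φ x) := by
    refine card_le_card_of_injOn (· * x) (fun a ha => ?_) (fun a _ b _ => mul_right_cancel)
    simp only [mem_coe, mem_filter] at ha ⊢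
    exact ⟨ha.2, by rw [map_mul, ha.1.2]⟩
  have hleave : #{a ∈ {a ∈ A | φ a = h} | a * x ∉ A} ≤ fiberCard φ (folBoundary X A) h := by
    refine card_le_card fun a ha => ?_
    simp only [mem_filter, mem_folBoundary] at ha ⊢
    exact ⟨⟨ha.1.1, x, hx, ha.2⟩, ha.1.2⟩
  simp only [fiberCard] at hstay hleave ⊢
  omega

lemma card_filter_mem_folBoundary_superlevelSet_le (N : ℕ) (h : H) :
    #{n ∈ Icc 1 N | h ∈ folBoundary (X.image φ) (superlevelSet φ A n)} ≤
      fiberCard φ (folBoundary X A) h := by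
  rcases (X ∪ X.image (·⁻¹)).eq_empty_or_nonempty with hX | hX
  · refine (card_eq_zero.2 (filter_eq_empty_iff.2 fun n hn hmem => ?_)).trans_le (Nat.zero_le _)
    obtain ⟨-, x, hx, -⟩ := (mem_folBoundary_superlevelSet φ X (mem_Icc.1 hn).1).1 hmem
    exact notMem_empty x (hX ▸ hx)
  obtain ⟨x₀, hx₀, hmin⟩ := exists_min_image _ (fun x => fiberCard φ A (h * φ x)) hX
  calc #{n ∈ Icc 1 N | h ∈ folBoundary (X.image φ) (superlevelSet φ A n)}
      ≤ #(Ioc (fiberCard φ A (h * φ x₀)) (fiberCard φ A h)) := by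
        refine card_le_card fun n hn => ?_
        rw [mem_filter, mem_Icc] at hn
        obtain ⟨hle, x, hx, hlt⟩ := (mem_folBoundary_superlevelSet φ X hn.1.1).1 hn.2
        exact mem_Ioc.2 ⟨(hmin x hx).trans_lt hlt, hle⟩
    _ = fiberCard φ A h - fiberCard φ A (h * φ x₀) := Nat.card_Ioc _ _
    _ ≤ fiberCard φ (folBoundary X A) h := fiberCard_sub_fiberCard_mul_le φ X hx₀ h

lemma sum_card_folBoundary_superlevelSet_le (N : ℕ) :
    ∑ n ∈ Icc 1 N, #(folBoundary (X.image φ) (superlevelSet φ A n)) ≤ #(folBoundary X A) := by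
  have hrestrict (n : ℕ) : {h ∈ A.image φ | h ∈ folBoundary (X.image φ) (superlevelSet φ A n)} =
      folBoundary (X.image φ) (superlevelSet φ A n) := by
    rw [filter_mem_eq_inter, inter_eq_right]
    exact (folBoundary_subset _ _).trans (filter_subset _ _)
  calc ∑ n ∈ Icc 1 N, #(folBoundary (X.image φ) (superlevelSet φ A n))
      = ∑ h ∈ A.image φ, #{n ∈ Icc 1 N | h ∈ folBoundary (X.image φ) (superlevelSet φ A n)} := by
        simp only [← congrArg card (hrestrict _), card_filter]
        exact sum_comm
    _ ≤ ∑ h ∈ A.image φ, fiberCard φ (folBoundary X A) h :=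
        sum_le_sum fun h _ => card_filter_mem_folBoundary_superlevelSet_le φ X N h
    _ = #(folBoundary X A) :=
        (card_eq_sum_card_fiberwise fun a ha => mem_image_of_mem φ (folBoundary_subset X A ha)).symm

lemma exists_card_folBoundary_mul_le (hA : A.Nonempty) :
    ∃ B : Finset H, B.Nonempty ∧
      #(folBoundary (X.image φ) B) * #A ≤ #(folBoundary X A) * #B := by
  obtain ⟨h₀, hh₀, hmax⟩ := exists_max_image (A.image φ) (fiberCard φ A) (hA.image φ)
  set N := fiberCard φ A h₀
  have hN : 1 ≤ N := (fiberCard_pos φ A).2 hh₀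
  obtain ⟨n, hn, hle⟩ := exists_le_of_sum_le (s := Icc 1 N)
    (f := fun n => #(folBoundary (X.image φ) (superlevelSet φ A n)) * #A)
    (g := fun n => #(folBoundary X A) * #(superlevelSet φ A n)) ⟨1, mem_Icc.2 ⟨le_rfl, hN⟩⟩ <| by
    rw [← sum_mul, ← mul_sum, sum_card_superlevelSet φ A hmax]
    exact Nat.mul_le_mul_right _ (sum_card_folBoundary_superlevelSet_le φ X N)
  exact ⟨_, ⟨h₀, (mem_superlevelSet φ A (mem_Icc.1 hn).1).2 (mem_Icc.1 hn).2⟩, hle⟩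

end Boundary

theorem folConst_mono_of_surjective_general {G H : Type*} [Group G] [Group H]
    (φ : G →* H) (X : Finset G) :
    folConst (X.image φ) ≤ folConst X := by
  refine le_folConst fun A hA => ?_
  obtain ⟨B, hB, hle⟩ := exists_card_folBoundary_mul_le φ X hA
  refine (folConst_le_div hB).trans ?_
  rw [div_le_div_iff₀ (by exact_mod_cast hB.card_pos) (by exact_mod_cast hA.card_pos)]
  exact_mod_cast hle

/-- Følner constants are monotone under surjective homomorphisms:
`Føl(H, φ(X)) ≤ Føl(G, X)`. -/
theorem folConst_mono_of_surjective {G H : Type*} [Group G] [Group H]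
    (φ : G →* H) (hφ : Function.Surjective φ) (X : Finset G)
    (hgen : Subgroup.closure (X : Set G) = ⊤) :
    folConst (X.image φ) ≤ folConst X :=
  folConst_mono_of_surjective_general φ X
end
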